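/- If a permutation σ ∈ S_n is 1234-avoiding, and all entries of σ that are neither left-to-right minima nor right-to-left maxima form a decreasing subsequence, then σ is the unique 1234-avoiding permutation with its given sets of values and positions of LTR minima and RTL maxima. In particular, the map σ ↦ (vmin(σ), pmin(σ), vmax(σ), pmax(σ)) is injective on S_n(1234). -/

import Mathlib

/-- A Dyck word: `true` = up step, `false` = down step. -/
def IsDyckWord (p : List Bool) : Prop :=
  (∀ t, t <+: p → t.count false ≤ t.count true) ∧ p.count true = p.count false

/-- Successive differences of a list (with an implicit initial 0). -/
def diffs (l : List ℕ) : List ℕ := l.zipWith (· - ·) (0 :: l)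

/-- The Dyck path of semilength `n` with ascent-descent code `(A, D)`. -/
def pathOfCode (n : ℕ) (A D : List ℕ) : List Bool :=
  ((diffs (A ++ [n])).zip (diffs (D ++ [n]))).flatMap
    fun ad => List.replicate ad.1 true ++ List.replicate ad.2 false

def IsLTRMin {n : ℕ} (σ : Equiv.Perm (Fin n)) (i : Fin n) : Prop := ∀ j, j < i → σ i < σ j
def IsRTLMax {n : ℕ} (σ : Equiv.Perm (Fin n)) (i : Fin n) : Prop := ∀ j, i < j → σ j < σ i

instance {n : ℕ} (σ : Equiv.Perm (Fin n)) (i : Fin n) : Decidable (IsLTRMin σ i) := by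
  unfold IsLTRMin; infer_instance
instance {n : ℕ} (σ : Equiv.Perm (Fin n)) (i : Fin n) : Decidable (IsRTLMax σ i) := by
  unfold IsRTLMax; infer_instance

def pmin {n : ℕ} (σ : Equiv.Perm (Fin n)) : Set (Fin n) := {i | IsLTRMin σ i}
def vmin {n : ℕ} (σ : Equiv.Perm (Fin n)) : Set (Fin n) := σ '' pmin σ
def pmax {n : ℕ} (σ : Equiv.Perm (Fin n)) : Set (Fin n) := {i | IsRTLMax σ i}
def vmax {n : ℕ} (σ : Equiv.Perm (Fin n)) : Set (Fin n) := σ '' pmax σ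

/-- Reverse-complement of a permutation. -/
def rcPerm {n : ℕ} (σ : Equiv.Perm (Fin n)) : Equiv.Perm (Fin n) :=
  (Fin.revPerm.trans σ).trans Fin.revPerm

def Avoids123 {n : ℕ} (σ : Equiv.Perm (Fin n)) : Prop :=
  ¬ ∃ i j k : Fin n, i < j ∧ j < k ∧ σ i < σ j ∧ σ j < σ k

def Avoids1234 {n : ℕ} (σ : Equiv.Perm (Fin n)) : Prop :=
  ¬ ∃ i j k l : Fin n, i < j ∧ j < k ∧ k < l ∧ σ i < σ j ∧ σ j < σ k ∧ σ k < σ l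

/-- The value (1-based) of the previous LTR minimum before position `i` (`n+1` if none). -/
def prevMinVal {n : ℕ} (σ : Equiv.Perm (Fin n)) (i : Fin n) : ℕ :=
  ((((List.finRange n).filter fun j => decide (j < i)).map fun j => (σ j : ℕ) + 1)).foldr min (n + 1)

/-- The map λ: each LTR minimum m_i gives m_{i-1} - m_i up steps, each maximal
block of ℓ non-minima gives ℓ+1 down steps. -/
def lamWord {n : ℕ} (σ : Equiv.Perm (Fin n)) : List Bool :=
  ((List.finRange n).flatMap fun i =>
    if IsLTRMin σ i then
      (if (i : ℕ) = 0 then [] else [false]) ++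
        List.replicate (prevMinVal σ i - ((σ i : ℕ) + 1)) true
    else [false]) ++ List.replicate (min n 1) false

/-- The value (1-based) of the largest entry to the right of position `i` (`0` if none). -/
def nextMaxVal {n : ℕ} (σ : Equiv.Perm (Fin n)) (i : Fin n) : ℕ :=
  ((((List.finRange n).filter fun j => decide (i < j)).map fun j => (σ j : ℕ) + 1)).foldr max 0

/-- The map μ: reading right to left, each RTL maximum M_i gives U^(M_i-M_{i-1}) D,
each non-maximum gives a D step. -/
def muWord {n : ℕ} (σ : Equiv.Perm (Fin n)) : List Bool :=
  (List.finRange n).reverse.flatMap fun i =>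
    if IsRTLMax σ i then
      List.replicate (((σ i : ℕ) + 1) - nextMaxVal σ i) true ++ [false]
    else [false]

/-- The set of partial sums of ascent lengths of a Dyck word (including the total). -/
def ascCode (p : List Bool) : Finset ℕ :=
  ((Finset.range p.length).filter fun i =>
      0 < i ∧ p.getD (i-1) false = true ∧ p.getD i true = false).image
    fun i => (p.take i).count true

/-- The set of partial sums of descent lengths of a Dyck word (excluding the total). -/
def descCode (p : List Bool) : Finset ℕ :=
  ((Finset.range p.length).filter fun i =>
      0 < i ∧ p.getD (i-1) true = false ∧ p.getD i false = true).image
    fun i => (p.take i).count false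

/-- Index of the first return of a Dyck word. -/
def firstRet (p : List Bool) : ℕ :=
  (((List.range (p.length + 1)).filter fun i =>
      decide (0 < i) && decide ((p.take i).count true = (p.take i).count false)).head?).getD p.length

def compsAux : ℕ → List Bool → List (List Bool)
  | 0, _ => []
  | fuel+1, p => if p = [] then [] else
      p.take (firstRet p) :: compsAux fuel (p.drop (firstRet p))

/-- Decomposition of a Dyck word into irreducible components. -/
def comps (p : List Bool) : List (List Bool) := compsAux p.length p

/-- The involution L' on an irreducible Dyck path, via ascent-descent codes. -/
def LprimeIrr (p : List Bool) : List Bool :=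
  let n := p.count true
  let A' := ((Finset.Icc 1 (n-2) \ ((ascCode p).erase n).image fun a => a - 1).image
      fun a => n - a).sort (· ≤ ·)
  let D' := ((Finset.Icc 1 (n-2) \ descCode p).image fun d => n - 1 - d).sort (· ≤ ·)
  pathOfCode n A' D'

/-- The involution L', acting on each irreducible component. -/
def LprimeWord (p : List Bool) : List Bool := (comps p).reverse.flatMap LprimeIrr

def ascList (p : List Bool) : List ℕ := ((ascCode p).erase (p.count true)).sort (· ≤ ·)
def descList (p : List Bool) : List ℕ := (descCode p).sort (· ≤ ·)

def IrreducibleDyck (p : List Bool) : Prop :=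
  IsDyckWord p ∧ p ≠ [] ∧ ∀ t, t <+: p → t ≠ [] → t ≠ p → t.count false < t.count true

/-- Covering relation: `Q` covers `P` if the code of `Q` is obtained from the code of
`P` by deleting `A_i` from the ascent code and `D_j` from the descent code, `i ≤ j`. -/
def CoversIrr (P Q : List Bool) : Prop :=
  IrreducibleDyck P ∧ IrreducibleDyck Q ∧
  ∃ i j : ℕ, i ≤ j ∧ ascList Q = (ascList P).eraseIdx i ∧ descList Q = (descList P).eraseIdx j

/-- The order relation on Dyck paths. -/
def DyckLE (P Q : List Bool) : Prop :=
  List.Forall₂ (Relation.ReflTransGen CoversIrr) (comps P) (comps Q)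

def PermEquiv {n : ℕ} (σ τ : Equiv.Perm (Fin n)) : Prop :=
  vmin σ = vmin τ ∧ pmin σ = pmin τ ∧ vmax σ = vmax τ ∧ pmax σ = pmax τ

def NonSpecialDecreasing {n : ℕ} (τ : Equiv.Perm (Fin n)) : Prop :=
  ∀ i j : Fin n, i < j → ¬ IsLTRMin τ i → ¬ IsRTLMax τ i →
    ¬ IsLTRMin τ j → ¬ IsRTLMax τ j → τ j < τ i

/-!
In a 1234-avoiding permutation the entries that are neither left-to-right minima nor
right-to-left maxima decrease: an ascent `σ i < σ j` among them, preceded by a smaller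
entry (as `i` is no LTR minimum) and followed by a larger one (as `j` is no RTL maximum),
would be a 1234. The LTR minima and the RTL maxima decrease as well, so the positions split
into three classes, each known from `(vmin, pmin, vmax, pmax)` together with its set of
values, on which the permutation decreases; and a decreasing map is determined by its
domain and its image.
-/

theorem Set.EqOn.of_strictAntiOn_of_image_eq {β γ : Type*} [LinearOrder β] [WellFoundedGT β]
    [Preorder γ] {f g : β → γ} {s : Set β} (hf : StrictAntiOn f s) (hg : StrictAntiOn g s)
    (hfg : f '' s = g '' s) : Set.EqOn f g s := by
  have hrange : (Set.range fun x : s => f x) = Set.range fun x : s => g x := by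
    rw [← Set.image_eq_range, ← Set.image_eq_range, hfg]
  have hrestrict := (StrictAnti.range_inj (f := fun x : s => f x) (g := fun x : s => g x)
    (fun x y hxy => hf x.2 y.2 hxy) (fun x y hxy => hg x.2 y.2 hxy)).mp hrange
  exact fun x hx => congrFun hrestrict ⟨x, hx⟩

section Permutations

variable {n : ℕ}

theorem strictAntiOn_pmin (σ : Equiv.Perm (Fin n)) : StrictAntiOn σ (pmin σ) :=
  fun _ _ _ hj hij => hj _ hij

theorem strictAntiOn_pmax (σ : Equiv.Perm (Fin n)) : StrictAntiOn σ (pmax σ) :=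
  fun _ hi _ _ hij => hi _ hij

theorem NonSpecialDecreasing.strictAntiOn {σ : Equiv.Perm (Fin n)}
    (h : NonSpecialDecreasing σ) : StrictAntiOn σ (pmin σ ∪ pmax σ)ᶜ := by
  intro i hi j hj hij
  simp only [Set.mem_compl_iff, Set.mem_union, not_or] at hi hj
  exact h i j hij hi.1 hi.2 hj.1 hj.2

theorem Avoids1234.nonSpecialDecreasing {σ : Equiv.Perm (Fin n)} (h : Avoids1234 σ) :
    NonSpecialDecreasing σ := by
  intro i j hij hi _ _ hj
  simp only [IsLTRMin, IsRTLMax, not_forall, not_lt, exists_prop] at hi hj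
  obtain ⟨a, hai, hσai⟩ := hi
  obtain ⟨b, hjb, hσjb⟩ := hj
  have strict {x y : Fin n} (hxy : x ≠ y) (hle : σ x ≤ σ y) : σ x < σ y :=
    hle.lt_of_ne (σ.injective.ne hxy)
  by_contra! hσij
  exact h ⟨a, i, j, b, hai, hij, hjb, strict hai.ne hσai, strict hij.ne hσij,
    strict hjb.ne hσjb⟩

theorem eq_of_permEquiv {σ τ : Equiv.Perm (Fin n)} (hσ : NonSpecialDecreasing σ)
    (hτ : NonSpecialDecreasing τ) (h : PermEquiv σ τ) : σ = τ := by
  obtain ⟨hvmin, hpmin, hvmax, hpmax⟩ := h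
  have hrest : σ '' (pmin σ ∪ pmax σ)ᶜ = τ '' (pmin σ ∪ pmax σ)ᶜ := by
    rw [Set.image_compl_eq σ.bijective, Set.image_compl_eq τ.bijective, Set.image_union,
      Set.image_union]
    change (vmin σ ∪ vmax σ)ᶜ = (τ '' pmin σ ∪ τ '' pmax σ)ᶜ
    rw [hpmin, hpmax, hvmin, hvmax, vmin, vmax]
  refine Equiv.ext fun i => ?_
  by_cases himin : i ∈ pmin σ
  · exact Set.EqOn.of_strictAntiOn_of_image_eq (strictAntiOn_pmin σ)
      (by rw [hpmin]; exact strictAntiOn_pmin τ) (hvmin.trans (by rw [vmin, hpmin])) himin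
  by_cases himax : i ∈ pmax σ
  · exact Set.EqOn.of_strictAntiOn_of_image_eq (strictAntiOn_pmax σ)
      (by rw [hpmax]; exact strictAntiOn_pmax τ) (hvmax.trans (by rw [vmax, hpmax])) himax
  · exact Set.EqOn.of_strictAntiOn_of_image_eq hσ.strictAntiOn
      (by rw [hpmin, hpmax]; exact hτ.strictAntiOn) hrest (by simp [himin, himax])

end Permutations

theorem avoids1234_unique_with_min_max_data_general {n : ℕ} (σ : Equiv.Perm (Fin n))
    (h1 : Avoids1234 σ) :
    (∀ τ : Equiv.Perm (Fin n), Avoids1234 τ → PermEquiv σ τ → τ = σ) ∧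
      ∀ α β : Equiv.Perm (Fin n), Avoids1234 α → Avoids1234 β → PermEquiv α β → α = β := by
  have injective {α β : Equiv.Perm (Fin n)} (hα : Avoids1234 α) (hβ : Avoids1234 β)
      (h : PermEquiv α β) : α = β :=
    eq_of_permEquiv hα.nonSpecialDecreasing hβ.nonSpecialDecreasing h
  exact ⟨fun τ hτ h => (injective h1 hτ h).symm, fun _ _ => injective⟩

/-- A 1234-avoiding permutation whose non-minima-non-maxima entries decrease is the
unique 1234-avoiding permutation with its values and positions of LTR minima and RTL
maxima; in particular σ ↦ (vmin, pmin, vmax, pmax) is injective on 1234-avoiders. -/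
theorem avoids1234_unique_with_min_max_data {n : ℕ} (σ : Equiv.Perm (Fin n))
    (h1 : Avoids1234 σ) (h2 : NonSpecialDecreasing σ) :
    (∀ τ : Equiv.Perm (Fin n), Avoids1234 τ → PermEquiv σ τ → τ = σ) ∧
      ∀ α β : Equiv.Perm (Fin n), Avoids1234 α → Avoids1234 β → PermEquiv α β → α = β :=
  avoids1234_unique_with_min_max_data_general σ h1
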